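/- If {A, B, C} is a triangle (3-clique) in the k-supertoken graph F_k(G), then G contains a triangle; moreover, either A ∩ B ∩ C is a multiset of size k−1 contained in each of A, B, C and the three remaining tokens form a triangle in G (Type 1), or each of A, B, C is contained in the union of the other two, with a common multiset of size k−2 and two moving tokens that together with one fixed vertex form a triangle in G (Type 2). -/

import Mathlib

lemma pair_multiset_eq {V : Type*} [DecidableEq V] {a b c d : V}
    (h : ({a, b} : Multiset V) = {c, d}) : (a = c ∧ b = d) ∨ (a = d ∧ b = c) := by
  rcases Multiset.cons_eq_cons.mp h with ⟨h1, h2⟩ | ⟨hne, cs, h1, h2⟩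
  · exact Or.inl ⟨h1, by simpa using h2⟩
  · have hcs : cs = 0 := by
      have hc := congrArg Multiset.card h1
      simpa using hc
    subst hcs
    exact Or.inr ⟨(Multiset.singleton_inj.mp h2).symm, Multiset.singleton_inj.mp h1⟩


/-- The `k`-supertoken graph of a graph `G`: vertices are size-`k` multisets
(elements of `Sym V k`) of vertices of `G`; two multisets are adjacent if one is
obtained from the other by moving one token along an edge of `G`. -/
def SimpleGraph.superToken {V : Type*} (G : SimpleGraph V) (k : ℕ) :
    SimpleGraph (Sym V k) where
  Adj A B := ∃ u v : V, G.Adj u v ∧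
    ∃ S : Multiset V, (A : Multiset V) = u ::ₘ S ∧ (B : Multiset V) = v ::ₘ S
  symm := by
    refine ⟨?_⟩
    rintro A B ⟨u, v, huv, S, hA, hB⟩
    exact ⟨v, u, huv.symm, S, hB, hA⟩
  loopless := by
    refine ⟨?_⟩
    rintro A ⟨u, v, huv, S, hA, hB⟩
    rw [hA] at hB
    exact G.ne_of_adj huv ((Multiset.cons_inj_left S).mp hB)

/-- If `{A, B, C}` is a triangle in the `k`-supertoken graph `F_k(G)`,
then `G` contains a triangle; moreover, the triangle `{A,B,C}` is of Type 1
(a common sub-multiset of size `k−1` and the three remaining tokens form a triangle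
in `G`) or of Type 2 (a common sub-multiset of size `k−2`, with two moving tokens
that together with one fixed vertex form a triangle in `G`). -/
theorem superToken_triangle_types {V : Type*} [DecidableEq V] (G : SimpleGraph V)
    (k : ℕ) (hk : 1 ≤ k) (A B C : Sym V k)
    (hAB : (G.superToken k).Adj A B) (hAC : (G.superToken k).Adj A C)
    (hBC : (G.superToken k).Adj B C) :
    (∃ a b c : V, G.Adj a b ∧ G.Adj b c ∧ G.Adj a c) ∧
    ((∃ S : Multiset V, Multiset.card S = k - 1 ∧
        ∃ a b c : V, G.Adj a b ∧ G.Adj b c ∧ G.Adj a c ∧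
          (A : Multiset V) = a ::ₘ S ∧ (B : Multiset V) = b ::ₘ S ∧
          (C : Multiset V) = c ::ₘ S) ∨
      (∃ A' B' C' : Sym V k, ({A', B', C'} : Set (Sym V k)) = {A, B, C} ∧
        ∃ S : Multiset V, Multiset.card S = k - 2 ∧
          ∃ a w b : V, G.Adj a w ∧ G.Adj w b ∧ G.Adj a b ∧
            (A' : Multiset V) = a ::ₘ w ::ₘ S ∧ (B' : Multiset V) = b ::ₘ w ::ₘ S ∧
            (C' : Multiset V) = a ::ₘ b ::ₘ S)) := by
  obtain ⟨u, v, huv, S, hA1, hB1⟩ := hAB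
  obtain ⟨x, y, hxy, T, hA2, hC2⟩ := hAC
  obtain ⟨p, q, hpq, U, hB2, hC3⟩ := hBC
  have hcardA : Multiset.card (A : Multiset V) = k := A.prop
  rcases Multiset.cons_eq_cons.mp (hA1.symm.trans hA2) with ⟨hux, hST⟩ | ⟨hux, W, hSW, hTW⟩
  · -- Case 1: u = x, S = T
    subst hux; subst hST
    have h1 : q ::ₘ v ::ₘ S = p ::ₘ y ::ₘ S := by
      calc q ::ₘ v ::ₘ S = q ::ₘ p ::ₘ U := by rw [hB1.symm.trans hB2]
        _ = p ::ₘ q ::ₘ U := Multiset.cons_swap q p U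
        _ = p ::ₘ y ::ₘ S := by rw [← hC2.symm.trans hC3]
    have h2 : ({q, v} : Multiset V) + S = ({p, y} : Multiset V) + S := by
      simpa [Multiset.cons_add] using h1
    have h3 : ({q, v} : Multiset V) = {p, y} := add_right_cancel h2
    rcases pair_multiset_eq h3 with ⟨hqp, _⟩ | ⟨hqy, hvp⟩
    · exact absurd hqp hpq.ne'
    · rw [← hvp, hqy] at hpq
      -- hpq : G.Adj v y
      refine ⟨⟨u, v, y, huv, hpq, hxy⟩, Or.inl ⟨S, ?_, u, v, y, huv, hpq, hxy, hA1, hB1, hC2⟩⟩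
      rw [hA1] at hcardA; simp at hcardA; omega
  · -- Case 2: u ≠ x, S = x ::ₘ W, T = u ::ₘ W
    subst hSW; subst hTW
    have h1 : q ::ₘ v ::ₘ x ::ₘ W = p ::ₘ y ::ₘ u ::ₘ W := by
      calc q ::ₘ v ::ₘ x ::ₘ W = q ::ₘ p ::ₘ U := by rw [hB1.symm.trans hB2]
        _ = p ::ₘ q ::ₘ U := Multiset.cons_swap q p U
        _ = p ::ₘ y ::ₘ u ::ₘ W := by rw [← hC2.symm.trans hC3]
    have h3 : ({q, v, x} : Multiset V) = ({p, y, u} : Multiset V) := by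
      have h2 : ({q, v, x} : Multiset V) + W = ({p, y, u} : Multiset V) + W := by
        simpa [Multiset.cons_add] using h1
      exact add_right_cancel h2
    have hq : q ∈ ({p, y, u} : Multiset V) := h3 ▸ (by simp)
    simp only [Multiset.insert_eq_cons, Multiset.mem_cons, Multiset.mem_singleton] at hq
    rcases hq with hqp | hqy | hqu
    · exact absurd hqp hpq.ne'
    · -- q = y : contradiction
      have h4 : ({v, x} : Multiset V) = {p, u} := by
      -- {q,v,x} = {p,y,u} = {p,q,u} = q ::ₘ {p,u}
        have key : ({p, y, u} : Multiset V) = q ::ₘ ({p, u} : Multiset V) := by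
          rw [← hqy]
          show p ::ₘ q ::ₘ u ::ₘ 0 = q ::ₘ p ::ₘ u ::ₘ 0
          rw [Multiset.cons_swap p q]
        rw [key] at h3
        exact (Multiset.cons_inj_right q).mp h3
      rcases pair_multiset_eq h4 with ⟨_, hxu⟩ | ⟨hvu, _⟩
      · exact absurd hxu.symm hux
      · exact absurd hvu.symm huv.ne
    · -- q = u : Type 2
      have h4 : ({v, x} : Multiset V) = {p, y} := by
        have key : ({p, y, u} : Multiset V) = q ::ₘ ({p, y} : Multiset V) := by
          rw [← hqu]
          show p ::ₘ y ::ₘ q ::ₘ 0 = q ::ₘ p ::ₘ y ::ₘ 0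
          rw [Multiset.cons_swap y q, Multiset.cons_swap p q]
        rw [key] at h3
        exact (Multiset.cons_inj_right q).mp h3
      rcases pair_multiset_eq h4 with ⟨hvp, hxy'⟩ | ⟨hvy, hxp⟩
      · exact absurd hxy' hxy.ne
      · -- v = y, x = p, q = u
        rw [← hxp, hqu] at hpq   -- hpq : G.Adj x u
        rw [← hvy] at hxy        -- hxy : G.Adj x v
        rw [← hvy] at hC2        -- hC2 : ↑C = v ::ₘ u ::ₘ W
        refine ⟨⟨u, v, x, huv, hxy.symm, hpq.symm⟩,
          Or.inr ⟨A, B, C, rfl, W, ?_, u, x, v, hpq.symm, hxy, huv, hA1, hB1, ?_⟩⟩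
        · rw [hA1] at hcardA; simp at hcardA; omega
        · rw [hC2]; exact Multiset.cons_swap v u W
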